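/- (Weight increase.) Let (U,d) be a finite metric space, λ ≥ 0, and let w, w': U → ℝ be non-negative weight functions with w'(s) = w(s) + δ for one element s ∈ U and some δ ≥ 0, and w'(u) = w(u) for all u ≠ s. Write φ_w(S) = Σ_{u∈S} w(u) + λ·d(S) and φ_{w'}(S) = Σ_{u∈S} w'(u) + λ·d(S). Suppose S ⊆ U with |S| = p satisfies φ_w(S) ≥ (1/3)·φ_w(T) for every T ⊆ U with |T| = p, and let Δ = max(0, max over y ∈ S and x ∈ U∖S of φ_{w'}((S∖{y})∪{x}) − φ_{w'}(S)). Then φ_{w'}(S) + Δ ≥ (1/3)·φ_{w'}(T) for every T ⊆ U with |T| = p; i.e., for any weight increase an approximation ratio of 3 is maintained with a single oblivious update. -/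
import Mathlib


open Finset

/-- `dispSet d S` is the sum of `d u v` over all unordered pairs `{u,v}` of distinct
elements of `S` (for a symmetric `d` with `d u u = 0`, half the double sum). -/
noncomputable def dispSet {U : Type*} (d : U → U → ℝ) (S : Finset U) : ℝ :=
  (∑ u ∈ S, ∑ v ∈ S, d u v) / 2

/-- The max-sum diversification objective `φ(S) = Σ_{u∈S} w(u) + λ·d(S)`
for a modular quality function given by weights `w`. -/
noncomputable def obj {U : Type*} (w : U → ℝ) (lam : ℝ) (d : U → U → ℝ)
    (S : Finset U) : ℝ :=
  ∑ u ∈ S, w u + lam * dispSet d S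

/-- `bestGain φ S = max(0, max over y ∈ S, x ∉ S of φ((S\{y})∪{x}) - φ(S))`:
the objective gain of the best single swap (the oblivious update rule). -/
noncomputable def bestGain {U : Type*} [Fintype U] [DecidableEq U]
    (φ : Finset U → ℝ) (S : Finset U) : ℝ :=
  (insert (0 : ℝ) ((S ×ˢ (Finset.univ \ S)).image
      fun pr => φ (insert pr.2 (S.erase pr.1)) - φ S)).max'
    (Finset.insert_nonempty _ _)

section Aux

variable {U : Type*} [DecidableEq U]

lemma dispSet_nonneg (d : U → U → ℝ) (hd : ∀ u v, 0 ≤ d u v) (S : Finset U) :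
    0 ≤ dispSet d S := by
  have h : (0:ℝ) ≤ ∑ u ∈ S, ∑ v ∈ S, d u v :=
    Finset.sum_nonneg fun u _ => Finset.sum_nonneg fun v _ => hd u v
  unfold dispSet
  linarith

lemma obj_nonneg (w : U → ℝ) (lam : ℝ) (d : U → U → ℝ) (hw : ∀ u, 0 ≤ w u)
    (hlam : 0 ≤ lam) (hd : ∀ u v, 0 ≤ d u v) (S : Finset U) :
    0 ≤ obj w lam d S :=
  add_nonneg (Finset.sum_nonneg fun u _ => hw u)
    (mul_nonneg hlam (dispSet_nonneg d hd S))

lemma dispSet_insert (d : U → U → ℝ) (hsymm : ∀ u v, d u v = d v u)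
    (hrefl : ∀ u, d u u = 0) {x : U} {A : Finset U} (hx : x ∉ A) :
    dispSet d (insert x A) = dispSet d A + ∑ v ∈ A, d x v := by
  unfold dispSet
  rw [Finset.sum_insert hx]
  have h1 : ∀ u : U, ∑ v ∈ insert x A, d u v = d u x + ∑ v ∈ A, d u v :=
    fun u => Finset.sum_insert hx
  simp_rw [h1]
  rw [Finset.sum_add_distrib]
  have h2 : ∑ u ∈ A, d u x = ∑ u ∈ A, d x u :=
    Finset.sum_congr rfl fun u _ => hsymm u x
  rw [hrefl, h2]
  ring

lemma dispSet_eq_erase (d : U → U → ℝ) (hsymm : ∀ u v, d u v = d v u)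
    (hrefl : ∀ u, d u u = 0) {A : Finset U} {y : U} (hy : y ∈ A) :
    dispSet d A = dispSet d (A.erase y) + ∑ v ∈ A.erase y, d y v := by
  conv_lhs => rw [← Finset.insert_erase hy]
  exact dispSet_insert d hsymm hrefl (Finset.notMem_erase y A)

lemma obj_insert_erase (w : U → ℝ) (lam : ℝ) (d : U → U → ℝ)
    (hsymm : ∀ u v, d u v = d v u) (hrefl : ∀ u, d u u = 0)
    {S : Finset U} {x y : U} (hy : y ∈ S) (hx : x ∉ S) :
    obj w lam d (insert x (S.erase y)) =
      obj w lam d S - (w y + lam * ∑ v ∈ S.erase y, d y v)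
        + (w x + lam * ∑ v ∈ S.erase y, d x v) := by
  have hxe : x ∉ S.erase y := fun h => hx (Finset.mem_of_mem_erase h)
  have hw1 : ∑ v ∈ S, w v = ∑ v ∈ S.erase y, w v + w y := by
    rw [Finset.sum_erase_eq_sub hy]; ring
  unfold obj
  rw [Finset.sum_insert hxe, dispSet_insert d hsymm hrefl hxe,
      dispSet_eq_erase d hsymm hrefl hy, hw1]
  ring

lemma bestGain_nonneg [Fintype U] (φ : Finset U → ℝ) (S : Finset U) :
    0 ≤ bestGain φ S :=
  Finset.le_max' _ _ (Finset.mem_insert_self _ _)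

lemma sub_le_bestGain [Fintype U] (φ : Finset U → ℝ) {S : Finset U} {y x : U}
    (hy : y ∈ S) (hx : x ∉ S) :
    φ (insert x (S.erase y)) - φ S ≤ bestGain φ S := by
  apply Finset.le_max'
  apply Finset.mem_insert_of_mem
  exact Finset.mem_image.mpr
    ⟨(y, x), Finset.mem_product.mpr
      ⟨hy, Finset.mem_sdiff.mpr ⟨Finset.mem_univ x, hx⟩⟩, rfl⟩

/-- Routing lemma: all pairwise distances within `T` can be routed through
the elements of `S.erase ys`, when `|T| = |S|`. -/
lemma dispSet_le_route (d : U → U → ℝ) (hsymm : ∀ u v, d u v = d v u)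
    (hnonneg : ∀ u v, 0 ≤ d u v) (hrefl : ∀ u, d u u = 0)
    (htri : ∀ u v w, d u w ≤ d u v + d v w)
    {S T : Finset U} {ys : U} (hys : ys ∈ S) (hcard : T.card = S.card) :
    dispSet d T ≤ ∑ t ∈ T, ∑ v ∈ S.erase ys, d t v := by
  set n : ℕ := (S.erase ys).card with hn
  rcases Nat.eq_zero_or_pos n with hn0 | hnpos
  · -- S.erase ys is empty, so S and T are singletons
    have hS1 : S.card = 1 := by
      have := Finset.card_erase_of_mem hys
      have hSpos : 0 < S.card := Finset.card_pos.mpr ⟨ys, hys⟩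
      omega
    have hT1 : T.card = 1 := by rw [hcard, hS1]
    obtain ⟨t, rfl⟩ := Finset.card_eq_one.mp hT1
    have hd : dispSet d {t} = 0 := by
      simp [dispSet, hrefl]
    rw [hd]
    exact Finset.sum_nonneg fun u _ => Finset.sum_nonneg fun v _ => hnonneg u v
  · -- main case
    set E : U → ℝ := fun t => ∑ v ∈ S.erase ys, d t v with hE
    have hEnn : ∀ t, 0 ≤ E t := fun t =>
      Finset.sum_nonneg fun v _ => hnonneg t v
    have hcards : ∀ t ∈ T, (T.erase t).card = n := by
      intro t ht
      rw [Finset.card_erase_of_mem ht, hn, Finset.card_erase_of_mem hys, hcard]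
    have key : ∀ t ∈ T, ∀ t' ∈ T.erase t,
        (n:ℝ) * d t t' ≤ ∑ v ∈ S.erase ys, (d t v + d v t') := by
      intro t _ t' _
      have := Finset.card_nsmul_le_sum (S.erase ys)
        (fun v => d t v + d v t') (d t t') (fun v _ => htri t v t')
      simpa [nsmul_eq_mul] using this
    have main : (n:ℝ) * (∑ t ∈ T, ∑ t' ∈ T, d t t') ≤ 2 * (n:ℝ) * ∑ t ∈ T, E t := by
      have step1 : (n:ℝ) * (∑ t ∈ T, ∑ t' ∈ T, d t t')
          = ∑ t ∈ T, ∑ t' ∈ T.erase t, (n:ℝ) * d t t' := by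
        rw [Finset.mul_sum]
        refine Finset.sum_congr rfl fun t ht => ?_
        rw [← Finset.mul_sum]
        congr 1
        exact (Finset.sum_erase T (by simp [hrefl t])).symm
      have step2 : ∑ t ∈ T, ∑ t' ∈ T.erase t, (n:ℝ) * d t t'
          ≤ ∑ t ∈ T, ∑ t' ∈ T.erase t, ∑ v ∈ S.erase ys, (d t v + d v t') :=
        Finset.sum_le_sum fun t ht =>
          Finset.sum_le_sum fun t' ht' => key t ht t' ht'
      have step3 : ∀ t ∈ T, ∑ t' ∈ T.erase t, ∑ v ∈ S.erase ys, (d t v + d v t')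
          = (n:ℝ) * E t + (∑ t' ∈ T, E t' - E t) := by
        intro t ht
        have inner : ∀ t' : U, ∑ v ∈ S.erase ys, (d t v + d v t') = E t + E t' := by
          intro t'
          rw [Finset.sum_add_distrib]
          congr 1
          exact Finset.sum_congr rfl fun v _ => hsymm v t'
        simp_rw [inner]
        rw [Finset.sum_add_distrib, Finset.sum_const, Finset.sum_erase_eq_sub ht,
          hcards t ht, nsmul_eq_mul]
      have step4 : ∑ t ∈ T, ((n:ℝ) * E t + (∑ t' ∈ T, E t' - E t))
          = 2 * (n:ℝ) * ∑ t ∈ T, E t := by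
        rw [Finset.sum_add_distrib, ← Finset.mul_sum, Finset.sum_sub_distrib,
          Finset.sum_const]
        have hTcard : T.card = n + 1 := by
          rw [hcard, hn, Finset.card_erase_of_mem hys]
          have hSpos : 0 < S.card := Finset.card_pos.mpr ⟨ys, hys⟩
          omega
        rw [hTcard]
        push_cast
        ring
      calc (n:ℝ) * (∑ t ∈ T, ∑ t' ∈ T, d t t')
          = ∑ t ∈ T, ∑ t' ∈ T.erase t, (n:ℝ) * d t t' := step1
        _ ≤ ∑ t ∈ T, ∑ t' ∈ T.erase t, ∑ v ∈ S.erase ys, (d t v + d v t') := step2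
        _ = ∑ t ∈ T, ((n:ℝ) * E t + (∑ t' ∈ T, E t' - E t)) :=
            Finset.sum_congr rfl step3
        _ = 2 * (n:ℝ) * ∑ t ∈ T, E t := step4
    have hnpos' : (0:ℝ) < (n:ℝ) := by exact_mod_cast hnpos
    have hdouble : ∑ t ∈ T, ∑ t' ∈ T, d t t' ≤ 2 * ∑ t ∈ T, E t := by
      nlinarith [main]
    unfold dispSet
    linarith

end Aux

/-- Weight increase: if `S` is a 3-approximation under weights `w`, and `w'` increases
the weight of a single element `s` by `δ ≥ 0`, then a single oblivious update
restores the 3-approximation under `w'`. -/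
theorem stmt_14 {U : Type*} [Fintype U] [DecidableEq U] (d : U → U → ℝ)
    (hsymm : ∀ u v, d u v = d v u)
    (hnonneg : ∀ u v, 0 ≤ d u v)
    (hrefl : ∀ u, d u u = 0)
    (htri : ∀ u v w, d u w ≤ d u v + d v w)
    (w w' : U → ℝ) (hw : ∀ u, 0 ≤ w u) (hw' : ∀ u, 0 ≤ w' u)
    (s : U) (δ : ℝ) (hδ : 0 ≤ δ)
    (hws : w' s = w s + δ) (hwu : ∀ u, u ≠ s → w' u = w u)
    (lam : ℝ) (hlam : 0 ≤ lam)
    (p : ℕ) (S : Finset U) (hS : S.card = p)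
    (happrox : ∀ T : Finset U, T.card = p → obj w lam d S ≥ (1 / 3) * obj w lam d T) :
    ∀ T : Finset U, T.card = p →
      obj w' lam d S + bestGain (obj w' lam d) S ≥ (1 / 3) * obj w' lam d T := by
  intro T hT
  set Δ := bestGain (obj w' lam d) S with hΔdef
  have hΔ0 : 0 ≤ Δ := bestGain_nonneg _ _
  have hobjconv : ∀ A : Finset U,
      obj w' lam d A = obj w lam d A + (if s ∈ A then δ else 0) := by
    intro A
    unfold obj
    have hsum : ∑ u ∈ A, w' u = ∑ u ∈ A, (w u + if u = s then δ else 0) := by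
      refine Finset.sum_congr rfl fun u _ => ?_
      by_cases h : u = s
      · subst h; simp [hws]
      · simp [h, hwu u h]
    rw [hsum, Finset.sum_add_distrib, Finset.sum_ite_eq' A s (fun _ => δ)]
    ring
  have hTw : obj w lam d T ≤ 3 * obj w lam d S := by
    have h := happrox T hT; linarith
  have hφS0 : 0 ≤ obj w lam d S := obj_nonneg w lam d hw hlam hnonneg S
  have hφT0 : 0 ≤ obj w lam d T := obj_nonneg w lam d hw hlam hnonneg T
  rw [ge_iff_le]
  by_cases hsS : s ∈ S
  · have e1 := hobjconv T
    have e2 := hobjconv S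
    rw [if_pos hsS] at e2
    have hite_le : (if s ∈ T then δ else 0) ≤ δ := by split_ifs <;> linarith
    linarith
  · have e2 := hobjconv S
    rw [if_neg hsS] at e2
    by_cases hsT : s ∈ T
    case neg =>
      have e1 := hobjconv T
      rw [if_neg hsT] at e1
      linarith
    case pos =>
      have e1 := hobjconv T
      rw [if_pos hsT] at e1
      -- main case : s ∈ T \ S
      have hSne : S.Nonempty := by
        rw [← Finset.card_pos, hS, ← hT]
        exact Finset.card_pos.mpr ⟨s, hsT⟩
      set G : U → ℝ := fun y => ∑ v ∈ S.erase y, d y v with hG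
      set g : U → ℝ := fun y => w y + lam * G y with hg
      have hGnn : ∀ y, 0 ≤ G y := fun y =>
        Finset.sum_nonneg fun v _ => hnonneg y v
      have hswap : ∀ y ∈ S, ∀ x, x ∉ S →
          w' x + lam * ∑ v ∈ S.erase y, d x v ≤ Δ + w y + lam * G y := by
        intro y hy x hx
        have h := sub_le_bestGain (obj w' lam d) hy hx
        rw [obj_insert_erase w' lam d hsymm hrefl hy hx] at h
        have hwy : w' y = w y := hwu y (by rintro rfl; exact hsS hy)
        rw [hwy] at h
        simp only [hG]
        linarith
      have hdel : ∀ y ∈ S, δ ≤ Δ + g y := by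
        intro y hy
        have h := hswap y hy s hsS
        have h2 : 0 ≤ lam * ∑ v ∈ S.erase y, d s v :=
          mul_nonneg hlam (Finset.sum_nonneg fun v _ => hnonneg s v)
        have h3 := hw s
        rw [hws] at h
        simp only [hg]
        linarith
      obtain ⟨y₀, hy₀S, hy₀min⟩ := S.exists_min_image g hSne
      by_cases hcase : g y₀ ≤ 2 * Δ
      · have h1 := hdel y₀ hy₀S
        linarith
      · push_neg at hcase
        -- 2Δ < g y for all y ∈ S
        have hsumΔ : (S.card : ℝ) * (2 * Δ) ≤ ∑ y ∈ S, g y := by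
          have h := Finset.card_nsmul_le_sum S g (2 * Δ)
            (fun y hy => le_of_lt (lt_of_lt_of_le hcase (hy₀min y hy)))
          simpa [nsmul_eq_mul] using h
        have hQ : ∑ y ∈ S, g y = ∑ y ∈ S, w y + lam * (2 * dispSet d S) := by
          have hGsum : ∑ y ∈ S, G y = 2 * dispSet d S := by
            have h1 : ∀ y ∈ S, G y = ∑ v ∈ S, d y v := by
              intro y _
              simp only [hG]
              exact Finset.sum_erase S (hrefl y)
            rw [Finset.sum_congr rfl h1]
            unfold dispSet
            ring
          simp only [hg]
          rw [Finset.sum_add_distrib, ← Finset.mul_sum, hGsum]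
        have hQle : ∑ y ∈ S, g y ≤ 2 * obj w lam d S := by
          have h1 : 0 ≤ ∑ y ∈ S, w y := Finset.sum_nonneg fun y _ => hw y
          have h2 : 0 ≤ lam * dispSet d S :=
            mul_nonneg hlam (dispSet_nonneg d hnonneg S)
          unfold obj
          rw [hQ]
          linarith
        -- pick ys ∈ S \ T minimizing g
        have hcardTS : (S \ T).card = (T \ S).card := by
          have h1 := Finset.card_sdiff_add_card_inter S T
          have h2 := Finset.card_sdiff_add_card_inter T S
          rw [Finset.inter_comm] at h2
          omega
        have hSTne : (S \ T).Nonempty := by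
          rw [← Finset.card_pos, hcardTS]
          exact Finset.card_pos.mpr ⟨s, Finset.mem_sdiff.mpr ⟨hsT, hsS⟩⟩
        obtain ⟨ys, hysS', hysmin⟩ := (S \ T).exists_min_image g hSTne
        have hysS : ys ∈ S := (Finset.mem_sdiff.mp hysS').1
        set E : U → ℝ := fun t => ∑ v ∈ S.erase ys, d t v with hE
        have hEnn : ∀ t, 0 ≤ E t := fun t =>
          Finset.sum_nonneg fun v _ => hnonneg t v
        have hroute : dispSet d T ≤ ∑ t ∈ T, E t :=
          dispSet_le_route d hsymm hnonneg hrefl htri hysS (hT.trans hS.symm)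
        have hout : ∀ t ∈ T \ S, w' t + lam * E t ≤ Δ + g ys := by
          intro t ht
          have h := hswap ys hysS t (Finset.mem_sdiff.mp ht).2
          simp only [hg]
          linarith
        have hin : ∀ t ∈ T ∩ S, w' t + lam * E t ≤ g t := by
          intro t ht
          have htS : t ∈ S := (Finset.mem_inter.mp ht).2
          have hwt : w' t = w t := hwu t (by rintro rfl; exact hsS htS)
          have hEG : E t ≤ G t := by
            have h1 : E t = (∑ v ∈ S, d t v) - d t ys := by
              simp only [hE]; rw [Finset.sum_erase_eq_sub hysS]
            have h2 : G t = ∑ v ∈ S, d t v := by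
              simp only [hG]
              exact Finset.sum_erase S (hrefl t)
            rw [h1, h2]
            have := hnonneg t ys
            linarith
          simp only [hg]
          rw [hwt]
          nlinarith [mul_le_mul_of_nonneg_left hEG hlam]
        have hsplit : ∑ t ∈ T, (w' t + lam * E t)
            = ∑ t ∈ T ∩ S, (w' t + lam * E t) + ∑ t ∈ T \ S, (w' t + lam * E t) :=
          (Finset.sum_inter_add_sum_sdiff T S _).symm
        have hb1 : ∑ t ∈ T \ S, (w' t + lam * E t)
            ≤ ((T \ S).card : ℝ) * Δ + ((T \ S).card : ℝ) * g ys := by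
          have h := Finset.sum_le_card_nsmul (T \ S) _ (Δ + g ys) hout
          simpa [nsmul_eq_mul] using h
        have hb2 : ((T \ S).card : ℝ) * g ys ≤ ∑ y ∈ S \ T, g y := by
          have h := Finset.card_nsmul_le_sum (S \ T) g (g ys) hysmin
          rw [hcardTS] at h
          simpa [nsmul_eq_mul] using h
        have hb3 : ∑ t ∈ T ∩ S, (w' t + lam * E t) ≤ ∑ t ∈ T ∩ S, g t :=
          Finset.sum_le_sum hin
        have hb4 : ∑ t ∈ T ∩ S, g t + ∑ y ∈ S \ T, g y = ∑ y ∈ S, g y := by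
          rw [Finset.inter_comm]
          exact Finset.sum_inter_add_sum_sdiff S T g
        have hkp : ((T \ S).card : ℝ) ≤ (S.card : ℝ) := by
          have h1 : (T \ S).card ≤ T.card :=
            Finset.card_le_card (Finset.sdiff_subset)
          have h2 : T.card = S.card := hT.trans hS.symm
          exact_mod_cast h2 ▸ h1
        have hkΔ : ((T \ S).card : ℝ) * Δ ≤ (S.card : ℝ) * Δ :=
          mul_le_mul_of_nonneg_right hkp hΔ0
        -- assemble
        have hTbound : obj w' lam d T ≤ 3 * obj w lam d S := by
          have hstep : obj w' lam d T ≤ ∑ t ∈ T, (w' t + lam * E t) := by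
            unfold obj
            rw [Finset.sum_add_distrib, ← Finset.mul_sum]
            have := mul_le_mul_of_nonneg_left hroute hlam
            linarith
          have hchain : ∑ t ∈ T, (w' t + lam * E t)
              ≤ (S.card : ℝ) * Δ + ∑ y ∈ S, g y := by
            rw [hsplit]
            linarith
          have hpd : (S.card : ℝ) * Δ ≤ (1 / 2) * ∑ y ∈ S, g y := by linarith
          linarith
        linarith
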